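/- Let p be an odd prime and n ≥ p² + p. Then ν_p((n-1)!) + (n - p + 1) + (p - 3) + C(⌊(n-p-1)/(p-1)⌋ - p + 2, 2) ≤ n + p - 3 + C(⌊(n-2)/(p-1)⌋ - p + 2, 2). -/
import Mathlib

theorem inductive_step_ineq (p n : ℕ) (hp : p.Prime) (hodd : Odd p)
    (hn : p ^ 2 + p ≤ n) :
    padicValNat p (Nat.factorial (n - 1)) + (n - p + 1) + (p - 3) +
        Nat.choose ((n - p - 1) / (p - 1) - p + 2) 2 ≤
      n + p - 3 + Nat.choose ((n - 2) / (p - 1) - p + 2) 2 := by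
  haveI : Fact p.Prime := ⟨hp⟩
  have hp2 := hp.two_le
  have hpodd := Nat.odd_iff.mp hodd
  have hp3 : 3 ≤ p := by omega
  have hsq : p ^ 2 = p * p := sq p
  rw [hsq] at hn
  have hn' : 12 ≤ n := by nlinarith
  have hnp : p + 2 ≤ n := by nlinarith
  have hne : n - 1 ≠ 0 := by omega
  have hds : 1 ≤ (p.digits (n-1)).sum := by
    by_contra h
    push_neg at h
    interval_cases hs : (p.digits (n-1)).sum
    have hall := List.sum_eq_zero_iff.mp hs
    have hlast := Nat.getLast_digit_ne_zero p hne
    exact hlast (hall _ (List.getLast_mem _))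
  have hleg := sub_one_mul_padicValNat_factorial (p := p) (n - 1)
  have hv : padicValNat p (Nat.factorial (n - 1)) ≤ (n - 2) / (p - 1) := by
    rw [Nat.le_div_iff_mul_le (show 0 < p - 1 by omega), mul_comm, hleg]
    omega
  have hq : (n - 2) / (p - 1) = (n - p - 1) / (p - 1) + 1 := by
    have h2 : n - 2 = (n - p - 1) + (p - 1) := by omega
    rw [h2, Nat.add_div_right _ (by omega : 0 < p - 1)]
  have hqp : p ≤ (n - p - 1) / (p - 1) := by
    rw [Nat.le_div_iff_mul_le (show 0 < p - 1 by omega), mul_comm, Nat.sub_mul, one_mul]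
    omega
  set m := (n - p - 1) / (p - 1) with hm
  rw [hq]
  have h1 : m + 1 - p + 2 = (m - p + 2) + 1 := by omega
  rw [h1, Nat.choose_succ_succ' (m - p + 2) 1, Nat.choose_one_right,
    show (1:ℕ) + 1 = 2 from rfl]
  have hv' : padicValNat p (Nat.factorial (n - 1)) ≤ m + 1 := hq ▸ hv
  clear hleg
  omega
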